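/- Let G = K_1 ∨ (P_{ℓ₁} ∪ ⋯ ∪ P_{ℓ_r}) be a graph on n vertices with eigenvalues λ₁ ≥ ⋯ ≥ λ_n. Then for every 2 ≤ i ≤ n−1, λ_i ∈ (−2, 2); i.e., λ₂ < 2 and λ_{n−1} > −2. -/

import Mathlib

/-!
On a path, `2‖y‖² ∓ yᵀAy = y₀² + y_last² + ∑ₖ (yₖ ∓ yₖ₊₁)²`, which vanishes only for `y = 0`;
so the quadratic form of a disjoint union of paths is strictly between `-2‖y‖²` and `2‖y‖²`.
Two orthonormal eigenvectors of the cone span a plane containing a nonzero vector `x` vanishing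
at the apex, and the Rayleigh quotient of `x` lies between the two eigenvalues. Since `x` lives
on the paths, its Rayleigh quotient is in `(-2, 2)`: hence `λ₁, λ₂` are not both `≥ 2` and
`λₙ₋₁, λₙ` are not both `≤ -2`.
-/

open SimpleGraph Matrix

/-- Disjoint union of paths `P_{L 0}, …, P_{L (r-1)}`. -/
def pathsUnion (r : ℕ) (L : Fin r → ℕ) : SimpleGraph (Σ i, Fin (L i)) where
  Adj x y := x.1 = y.1 ∧ ((x.2 : ℕ) + 1 = (y.2 : ℕ) ∨ (y.2 : ℕ) + 1 = (x.2 : ℕ))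
  symm := ⟨by rintro x y ⟨h1, h2⟩; exact ⟨h1.symm, h2.symm⟩⟩
  loopless := ⟨by rintro x ⟨-, h | h⟩ <;> omega⟩

/-- Join of a graph with one new vertex (`K₁ ∨ F`), center `none`. -/
def cone {V : Type*} (F : SimpleGraph V) : SimpleGraph (Option V) where
  Adj x y := match x, y with
    | none, none => False
    | none, some _ => True
    | some _, none => True
    | some a, some b => F.Adj a b
  symm := ⟨by rintro (_ | a) (_ | b) h <;> simp_all <;> exact h.symm⟩
  loopless := ⟨by rintro (_ | a) h <;> simp_all⟩

/-- Join of two graphs. -/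
def gJoin {α β : Type*} (G : SimpleGraph α) (H : SimpleGraph β) : SimpleGraph (α ⊕ β) where
  Adj x y := match x, y with
    | .inl a, .inl b => G.Adj a b
    | .inr a, .inr b => H.Adj a b
    | _, _ => True
  symm := ⟨by rintro (a | a) (b | b) h <;> simp_all <;> exact h.symm⟩
  loopless := ⟨by rintro (a | a) h <;> simp_all⟩

/-- Cycle graph on `m` vertices. -/
def cycleG (m : ℕ) : SimpleGraph (Fin m) where
  Adj x y := x ≠ y ∧ (((x : ℕ) + 1) % m = (y : ℕ) ∨ ((y : ℕ) + 1) % m = (x : ℕ))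
  symm := ⟨by rintro x y ⟨h1, h2⟩; exact ⟨h1.symm, h2.symm⟩⟩
  loopless := ⟨by rintro x ⟨h, -⟩; exact h rfl⟩

/-- Real adjacency matrix of a graph. -/
noncomputable def adjMat {V : Type*} (G : SimpleGraph V) : Matrix V V ℝ :=
  letI := Classical.decRel G.Adj
  G.adjMatrix ℝ

/-- Largest adjacency eigenvalue. -/
noncomputable def maxEig {V : Type*} [Fintype V] [DecidableEq V] (G : SimpleGraph V) : ℝ :=
  sSup (spectrum ℝ (adjMat G))

/-- Smallest adjacency eigenvalue. -/
noncomputable def minEig {V : Type*} [Fintype V] [DecidableEq V] (G : SimpleGraph V) : ℝ :=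
  sInf (spectrum ℝ (adjMat G))

/-- Spread of a graph. -/
noncomputable def gspread {V : Type*} [Fintype V] [DecidableEq V] (G : SimpleGraph V) : ℝ :=
  maxEig G - minEig G

/-- Adjacency matrix of the path on `m` vertices. -/
def pathMatrix (m : ℕ) : Matrix (Fin m) (Fin m) ℝ :=
  Matrix.of fun a b => if (a : ℕ) + 1 = (b : ℕ) ∨ (b : ℕ) + 1 = (a : ℕ) then 1 else 0

/-- `H` is a minor of `G`. -/
def HasMinor {V W : Type*} (G : SimpleGraph V) (H : SimpleGraph W) : Prop :=
  ∃ B : W → Set V, (∀ w, (B w).Nonempty) ∧ (Pairwise fun a b => Disjoint (B a) (B b)) ∧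
    (∀ w, (G.induce (B w)).Connected) ∧
    (∀ ⦃a b⦄, H.Adj a b → ∃ u ∈ B a, ∃ v ∈ B b, G.Adj u v)

/-- Planarity via Wagner's theorem: no `K₅` and no `K_{3,3}` minor. -/
def IsPlanar {V : Type*} (G : SimpleGraph V) : Prop :=
  ¬ HasMinor G (⊤ : SimpleGraph (Fin 5)) ∧
  ¬ HasMinor G (completeBipartiteGraph (Fin 3) (Fin 3))

/-- Outerplanarity: no `K₄` and no `K_{2,3}` minor. -/
def IsOuterplanar {V : Type*} (G : SimpleGraph V) : Prop :=
  ¬ HasMinor G (⊤ : SimpleGraph (Fin 4)) ∧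
  ¬ HasMinor G (completeBipartiteGraph (Fin 2) (Fin 3))

namespace Matrix.IsHermitian

variable {n : Type*} [Fintype n] [DecidableEq n] {A : Matrix n n ℝ} (hA : A.IsHermitian)

lemma dotProduct_eigenvectorBasis (i j : n) :
    ⇑(hA.eigenvectorBasis i) ⬝ᵥ ⇑(hA.eigenvectorBasis j) = if i = j then 1 else 0 := by
  rw [← hA.eigenvectorBasis.inner_eq_ite, EuclideanSpace.inner_eq_star_dotProduct]
  simp [dotProduct_comm]

lemma exists_apply_eq_zero_quadForm_between_eigenvalues {j k : n} (hjk : j ≠ k) (v₀ : n) :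
    ∃ x : n → ℝ, x ≠ 0 ∧ x v₀ = 0 ∧
      min (hA.eigenvalues j) (hA.eigenvalues k) * (x ⬝ᵥ x) ≤ x ⬝ᵥ A *ᵥ x ∧
      x ⬝ᵥ A *ᵥ x ≤ max (hA.eigenvalues j) (hA.eigenvalues k) * (x ⬝ᵥ x) := by
  set v := ⇑(hA.eigenvectorBasis j)
  set w := ⇑(hA.eigenvectorBasis k)
  obtain ⟨a, b, hab, hx₀⟩ : ∃ a b : ℝ, a ^ 2 + b ^ 2 ≠ 0 ∧ a * v v₀ + b * w v₀ = 0 := by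
    by_cases h : v v₀ = 0 ∧ w v₀ = 0
    · exact ⟨1, 0, by norm_num, by simp [h.1]⟩
    · refine ⟨w v₀, -v v₀, ?_, by ring⟩
      contrapose! h
      constructor <;> nlinarith [sq_nonneg (v v₀), sq_nonneg (w v₀)]
  set x := a • v + b • w
  have hnorm : x ⬝ᵥ x = a ^ 2 + b ^ 2 := by
    simp [x, add_dotProduct, dotProduct_add, v, w, dotProduct_eigenvectorBasis, hjk, hjk.symm]
    ring
  have hform : x ⬝ᵥ A *ᵥ x = a ^ 2 * hA.eigenvalues j + b ^ 2 * hA.eigenvalues k := by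
    simp [x, v, w, mulVec_add, mulVec_smul, mulVec_eigenvectorBasis, add_dotProduct,
      dotProduct_add, dotProduct_eigenvectorBasis, hjk, hjk.symm]
    ring
  refine ⟨x, fun h ↦ hab (by simp [← hnorm, h]), by simpa [x] using hx₀, ?_, ?_⟩
  · rw [hform, hnorm]
    nlinarith [min_le_left (hA.eigenvalues j) (hA.eigenvalues k),
      min_le_right (hA.eigenvalues j) (hA.eigenvalues k), sq_nonneg a, sq_nonneg b]
  · rw [hform, hnorm]
    nlinarith [le_max_left (hA.eigenvalues j) (hA.eigenvalues k),
      le_max_right (hA.eigenvalues j) (hA.eigenvalues k), sq_nonneg a, sq_nonneg b]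

lemma min_eigenvalues_lt {j k : n} (hjk : j ≠ k) (v₀ : n) {c : ℝ}
    (h : ∀ x : n → ℝ, x ≠ 0 → x v₀ = 0 → x ⬝ᵥ A *ᵥ x < c * (x ⬝ᵥ x)) :
    min (hA.eigenvalues j) (hA.eigenvalues k) < c := by
  obtain ⟨x, hx, hx₀, hmin, -⟩ := hA.exists_apply_eq_zero_quadForm_between_eigenvalues hjk v₀
  have hnonneg : 0 ≤ x ⬝ᵥ x := Finset.sum_nonneg fun i _ ↦ mul_self_nonneg (x i)
  by_contra! hc
  linarith [h x hx hx₀, mul_le_mul_of_nonneg_right hc hnonneg]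

lemma lt_max_eigenvalues {j k : n} (hjk : j ≠ k) (v₀ : n) {c : ℝ}
    (h : ∀ x : n → ℝ, x ≠ 0 → x v₀ = 0 → c * (x ⬝ᵥ x) < x ⬝ᵥ A *ᵥ x) :
    c < max (hA.eigenvalues j) (hA.eigenvalues k) := by
  obtain ⟨x, hx, hx₀, -, hmax⟩ := hA.exists_apply_eq_zero_quadForm_between_eigenvalues hjk v₀
  have hnonneg : 0 ≤ x ⬝ᵥ x := Finset.sum_nonneg fun i _ ↦ mul_self_nonneg (x i)
  by_contra! hc
  linarith [h x hx hx₀, mul_le_mul_of_nonneg_right hc hnonneg]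

end Matrix.IsHermitian

lemma sum_sum_ite_val_add_one_eq {p : ℕ} (f : Fin (p + 1) → Fin (p + 1) → ℝ) :
    ∑ a : Fin (p + 1), ∑ b : Fin (p + 1), (if (a : ℕ) + 1 = b then f a b else 0) =
      ∑ k : Fin p, f k.castSucc k.succ := by
  have h : ∀ (k : Fin p) (a : Fin (p + 1)), ((a : ℕ) + 1 = k.succ ↔ a = k.castSucc) := by
    intro k a; simp [Fin.ext_iff]
  rw [Finset.sum_comm, Fin.sum_univ_succ]
  simp only [h, Fin.val_zero, Nat.add_one_ne_zero, if_false, Finset.sum_const_zero, zero_add,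
    Finset.sum_ite_eq', Finset.mem_univ, if_true]

lemma dotProduct_pathMatrix_mulVec {p : ℕ} (x : Fin (p + 1) → ℝ) :
    x ⬝ᵥ pathMatrix (p + 1) *ᵥ x = 2 * ∑ k : Fin p, x k.castSucc * x k.succ := by
  have hsplit : ∀ a b : Fin (p + 1), x a * (pathMatrix (p + 1) a b * x b) =
      (if (a : ℕ) + 1 = b then x a * x b else 0) + (if (b : ℕ) + 1 = a then x b * x a else 0) := by
    intro a b
    simp only [pathMatrix, of_apply]
    split_ifs <;> first | omega | ring
  simp only [dotProduct, mulVec, Finset.mul_sum, hsplit, Finset.sum_add_distrib]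
  rw [Finset.sum_comm (f := fun a b : Fin (p + 1) ↦ if (b : ℕ) + 1 = a then x b * x a else 0),
    sum_sum_ite_val_add_one_eq (fun a b ↦ x a * x b), ← Finset.mul_sum]
  ring

lemma two_mul_dotProduct_self_sub_path_eq_sum_sq {p : ℕ} (x : Fin (p + 1) → ℝ) {s : ℝ} (hs : s ^ 2 = 1) :
    2 * (x ⬝ᵥ x) - s * (2 * ∑ k : Fin p, x k.castSucc * x k.succ) =
      x 0 ^ 2 + x (Fin.last p) ^ 2 + ∑ k : Fin p, (x k.castSucc - s * x k.succ) ^ 2 := by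
  have hcs := Fin.sum_univ_castSucc fun a ↦ x a ^ 2
  have hsucc := Fin.sum_univ_succ fun a ↦ x a ^ 2
  have hsq : ∀ k : Fin p, (x k.castSucc - s * x k.succ) ^ 2 =
      x k.castSucc ^ 2 + x k.succ ^ 2 - s * (2 * (x k.castSucc * x k.succ)) := by
    intro k; linear_combination (x k.succ) ^ 2 * hs
  simp only [hsq, Finset.sum_sub_distrib, Finset.sum_add_distrib, ← Finset.mul_sum]
  simp only [dotProduct, ← sq]
  linarith

lemma eq_zero_of_apply_zero_of_castSucc_eq_mul_succ {p : ℕ} {x : Fin (p + 1) → ℝ} {s : ℝ} (h0 : x 0 = 0)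
    (hstep : ∀ k : Fin p, x k.castSucc = s * x k.succ) (hs : s ^ 2 = 1) : x = 0 := by
  funext a
  induction a using Fin.induction with
  | zero => exact h0
  | succ k ih =>
    rw [Pi.zero_apply] at ih ⊢
    calc x k.succ = s * (s * x k.succ) := by linear_combination (-x k.succ) * hs
      _ = 0 := by rw [← hstep k, ih, mul_zero]

lemma abs_dotProduct_pathMatrix_mulVec_lt {m : ℕ} {x : Fin m → ℝ} (hx : x ≠ 0) :
    |x ⬝ᵥ pathMatrix m *ᵥ x| < 2 * (x ⬝ᵥ x) := by
  obtain _ | p := m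
  · exact absurd (Subsingleton.elim x 0) hx
  have hsigned : ∀ s : ℝ, s ^ 2 = 1 → s * (x ⬝ᵥ pathMatrix (p + 1) *ᵥ x) < 2 * (x ⬝ᵥ x) := by
    intro s hs
    rw [← sub_pos, dotProduct_pathMatrix_mulVec, two_mul_dotProduct_self_sub_path_eq_sum_sq x hs]
    have hterms := Finset.sum_nonneg fun k (_ : k ∈ Finset.univ) ↦
      sq_nonneg (x (Fin.castSucc k) - s * x k.succ)
    by_contra! hle
    have h0 : x 0 = 0 := by nlinarith [sq_nonneg (x 0), sq_nonneg (x (Fin.last p))]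
    have hsum : ∑ k : Fin p, (x k.castSucc - s * x k.succ) ^ 2 = 0 := by
      nlinarith [sq_nonneg (x 0), sq_nonneg (x (Fin.last p))]
    rw [Finset.sum_eq_zero_iff_of_nonneg fun k _ ↦ sq_nonneg _] at hsum
    refine hx (eq_zero_of_apply_zero_of_castSucc_eq_mul_succ h0 (fun k ↦ ?_) hs)
    exact sub_eq_zero.1 (pow_eq_zero_iff two_ne_zero |>.1 (hsum k (Finset.mem_univ k)))
  rw [abs_lt]
  constructor <;> linarith [hsigned 1 (by norm_num), hsigned (-1) (by norm_num)]

lemma abs_dotProduct_pathMatrix_mulVec_le {m : ℕ} (x : Fin m → ℝ) :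
    |x ⬝ᵥ pathMatrix m *ᵥ x| ≤ 2 * (x ⬝ᵥ x) := by
  obtain rfl | hx := eq_or_ne x 0
  · simp
  · exact (abs_dotProduct_pathMatrix_mulVec_lt hx).le

section Sigma

variable {ι : Type*} [Fintype ι] {m : ι → Type*} [∀ i, Fintype (m i)] {R : Type*} [CommSemiring R]

lemma blockDiagonal'_mulVec_apply [DecidableEq ι] (M : ∀ i, Matrix (m i) (m i) R)
    (x : (Σ i, m i) → R) (i : ι) (a : m i) :
    (blockDiagonal' M *ᵥ x) ⟨i, a⟩ = (M i *ᵥ fun b ↦ x ⟨i, b⟩) a := by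
  simp only [mulVec, dotProduct, Fintype.sum_sigma]
  rw [Finset.sum_eq_single i]
  · simp only [blockDiagonal'_apply_eq]
  · intro j _ hj
    simp [blockDiagonal'_apply_ne _ _ _ (Ne.symm hj)]
  · simp

lemma dotProduct_blockDiagonal'_mulVec [DecidableEq ι]
    (M : ∀ i, Matrix (m i) (m i) R) (x : (Σ i, m i) → R) :
    x ⬝ᵥ blockDiagonal' M *ᵥ x = ∑ i, (fun a ↦ x ⟨i, a⟩) ⬝ᵥ M i *ᵥ fun a ↦ x ⟨i, a⟩ := by
  simp only [dotProduct, Fintype.sum_sigma, blockDiagonal'_mulVec_apply]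

lemma dotProduct_self_sigma (x : (Σ i, m i) → R) :
    x ⬝ᵥ x = ∑ i, (fun a ↦ x ⟨i, a⟩) ⬝ᵥ fun a ↦ x ⟨i, a⟩ :=
  Fintype.sum_sigma _

end Sigma

lemma adjMat_apply {V : Type*} (G : SimpleGraph V) (u v : V) [Decidable (G.Adj u v)] :
    adjMat G u v = if G.Adj u v then 1 else 0 := by
  unfold adjMat
  rw [adjMatrix_apply]
  congr

lemma adjMat_pathsUnion (r : ℕ) (L : Fin r → ℕ) :
    adjMat (pathsUnion r L) = blockDiagonal' fun i ↦ pathMatrix (L i) := by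
  classical
  ext ⟨i, a⟩ ⟨j, b⟩
  obtain rfl | hij := eq_or_ne i j
  · simp [adjMat_apply, pathsUnion, pathMatrix]
  · simp [adjMat_apply, pathsUnion, blockDiagonal'_apply_ne _ _ _ hij, hij]

lemma submatrix_some_adjMat_cone {V : Type*} (F : SimpleGraph V) :
    (adjMat (cone F)).submatrix some some = adjMat F := by
  classical
  ext a b
  simp [adjMat_apply, cone]

lemma dotProduct_mulVec_of_apply_none {V R : Type*} [Fintype V] [CommSemiring R]
    (A : Matrix (Option V) (Option V) R) {x : Option V → R} (hx : x none = 0) :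
    x ⬝ᵥ A *ᵥ x = (x ∘ some) ⬝ᵥ A.submatrix some some *ᵥ (x ∘ some) := by
  simp [dotProduct, mulVec, Fintype.sum_option, hx]

lemma dotProduct_self_of_apply_none {V R : Type*} [Fintype V] [CommSemiring R]
    {x : Option V → R} (hx : x none = 0) : x ⬝ᵥ x = (x ∘ some) ⬝ᵥ (x ∘ some) := by
  simp [dotProduct, Fintype.sum_option, hx]

lemma abs_dotProduct_adjMat_pathsUnion_mulVec_lt (r : ℕ) (L : Fin r → ℕ)
    {y : (Σ i, Fin (L i)) → ℝ} (hy : y ≠ 0) :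
    |y ⬝ᵥ adjMat (pathsUnion r L) *ᵥ y| < 2 * (y ⬝ᵥ y) := by
  obtain ⟨⟨i₀, a₀⟩, ha₀⟩ := Function.ne_iff.1 hy
  rw [adjMat_pathsUnion, dotProduct_blockDiagonal'_mulVec, dotProduct_self_sigma, Finset.mul_sum]
  refine (Finset.abs_sum_le_sum_abs _ _).trans_lt <| Finset.sum_lt_sum
    (fun i _ ↦ abs_dotProduct_pathMatrix_mulVec_le _) ⟨i₀, Finset.mem_univ _, ?_⟩
  exact abs_dotProduct_pathMatrix_mulVec_lt (Function.ne_iff.2 ⟨a₀, ha₀⟩)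

lemma abs_dotProduct_adjMat_cone_pathsUnion_mulVec_lt (r : ℕ) (L : Fin r → ℕ)
    {x : Option (Σ i, Fin (L i)) → ℝ} (hx : x ≠ 0) (hx₀ : x none = 0) :
    |x ⬝ᵥ adjMat (cone (pathsUnion r L)) *ᵥ x| < 2 * (x ⬝ᵥ x) := by
  have hy : x ∘ some ≠ 0 := fun h ↦ hx <| funext fun
    | none => hx₀
    | some s => congrFun h s
  rw [dotProduct_mulVec_of_apply_none _ hx₀, dotProduct_self_of_apply_none hx₀,
    submatrix_some_adjMat_cone]
  exact abs_dotProduct_adjMat_pathsUnion_mulVec_lt r L hy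

theorem stmt_3_general (r : ℕ) (L : Fin r → ℕ) (n : ℕ)
    (he : (adjMat (cone (pathsUnion r L))).IsHermitian)
    (μ : Fin n → ℝ) (hmono : Antitone μ)
    (hperm : ∃ e : Fin n ≃ Option (Σ i, Fin (L i)), ∀ i, μ i = he.eigenvalues (e i)) :
    ∀ i : Fin n, 0 < (i : ℕ) → (i : ℕ) < n - 1 → -2 < μ i ∧ μ i < 2 := by
  obtain ⟨e, hμ⟩ := hperm
  intro i hi₀ hin
  have hbound := fun x hx hx₀ ↦
    abs_lt.1 (abs_dotProduct_adjMat_cone_pathsUnion_mulVec_lt r L (x := x) hx hx₀)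
  have hsecond : μ ⟨1, by omega⟩ < 2 := by
    have := he.min_eigenvalues_lt (e.injective.ne (a₁ := ⟨0, by omega⟩) (a₂ := ⟨1, by omega⟩)
      (by simp)) none fun x hx hx₀ ↦ (hbound x hx hx₀).2
    rwa [← hμ, ← hμ, min_eq_right (hmono (by simp))] at this
  have hpenultimate : -2 < μ ⟨n - 2, by omega⟩ := by
    have := he.lt_max_eigenvalues (c := -2) (e.injective.ne (a₁ := ⟨n - 2, by omega⟩)
      (a₂ := ⟨n - 1, by omega⟩) (by simp; omega)) none fun x hx hx₀ ↦ by
        linarith [(hbound x hx hx₀).1]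
    rwa [← hμ, ← hμ, max_eq_left (hmono (Fin.mk_le_mk.2 (by omega)))] at this
  exact ⟨hpenultimate.trans_le (hmono (Fin.le_def.2 (by simp; omega))),
    (hmono (Fin.le_def.2 (by simp; omega))).trans_lt hsecond⟩

theorem stmt_3 (r : ℕ) (L : Fin r → ℕ) (n : ℕ)
    (hn : Fintype.card (Option (Σ i, Fin (L i))) = n)
    (he : (adjMat (cone (pathsUnion r L))).IsHermitian)
    (μ : Fin n → ℝ) (hmono : Antitone μ)
    (hperm : ∃ e : Fin n ≃ Option (Σ i, Fin (L i)), ∀ i, μ i = he.eigenvalues (e i)) :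
    ∀ i : Fin n, 0 < (i : ℕ) → (i : ℕ) < n - 1 → -2 < μ i ∧ μ i < 2 :=
  stmt_3_general r L n he μ hmono hperm
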